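/- arXiv:2603.12763 — 5 statements merged into one kernel-verified Lean document; each statement's English description precedes it below -/
import Mathlib

section
/- Uniformly higher value of information is equivalent to convexity of the difference of value functions: for continuous functions f, g : Δ(Ω) → ℝ with f, g convex, one has ∫ f dQ − f(bar(Q)) ≥ ∫ g dQ − g(bar(Q)) for every Borel probability measure Q on Δ(Ω) if and only if f − g is convex on Δ(Ω). -/
open scoped BigOperators
open MeasureTheory

private lemma integrable_of_contOn_simplex {Ω : Type*} [Fintype Ω] [Nonempty Ω]
    (h : (Ω → ℝ) → ℝ) (hc : ContinuousOn h (stdSimplex ℝ Ω))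
    (Q : Measure (Ω → ℝ)) [IsProbabilityMeasure Q]
    (hQ : ∀ᵐ p ∂Q, p ∈ stdSimplex ℝ Ω) : Integrable h Q := by
  -- Tietze extension
  obtain ⟨H, hH⟩ := ContinuousMap.exists_restrict_eq (isClosed_stdSimplex ℝ Ω)
    ⟨_, continuousOn_iff_continuous_restrict.mp hc⟩
  have hHeq : ∀ x ∈ stdSimplex ℝ Ω, H x = h x := fun x hx => by
    have := congrFun (congrArg ContinuousMap.toFun hH) ⟨x, hx⟩
    simpa using this
  have haem : h =ᵐ[Q] H := hQ.mono fun x hx => (hHeq x hx).symm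
  obtain ⟨C, hC⟩ := (isCompact_stdSimplex ℝ Ω).exists_bound_of_continuousOn hc
  refine Integrable.mono' (integrable_const C) (H.continuous.aestronglyMeasurable.congr haem.symm)
    (hQ.mono fun x hx => hC x hx)

/-- Uniformly higher value of information is equivalent to convexity of the difference
of value functions: for convex continuous `f, g` on the simplex,
`VoI_f(Q) ≥ VoI_g(Q)` for every Borel probability measure `Q` on the simplex
if and only if `f − g` is convex on the simplex. -/
theorem voi_dominance_iff_difference_convex {Ω : Type*} [Fintype Ω] [Nonempty Ω]
    (f g : (Ω → ℝ) → ℝ)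
    (hfconv : ConvexOn ℝ (stdSimplex ℝ Ω) f) (hfcont : ContinuousOn f (stdSimplex ℝ Ω))
    (hgconv : ConvexOn ℝ (stdSimplex ℝ Ω) g) (hgcont : ContinuousOn g (stdSimplex ℝ Ω)) :
    (∀ (Q : Measure (Ω → ℝ)), IsProbabilityMeasure Q → (∀ᵐ p ∂Q, p ∈ stdSimplex ℝ Ω) →
        (∫ p, f p ∂Q) - f (fun ω => ∫ p, p ω ∂Q)
          ≥ (∫ p, g p ∂Q) - g (fun ω => ∫ p, p ω ∂Q))
      ↔ ConvexOn ℝ (stdSimplex ℝ Ω) (fun p => f p - g p) := by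
  constructor
  · -- dominance → convexity of f - g
    intro hdom
    refine ⟨convex_stdSimplex ℝ Ω, fun x hx y hy a b ha hb hab => ?_⟩
    set Q : Measure (Ω → ℝ) :=
      ENNReal.ofReal a • Measure.dirac x + ENNReal.ofReal b • Measure.dirac y with hQdef
    have hprob : IsProbabilityMeasure Q := by
      constructor
      simp [hQdef, ← ENNReal.ofReal_add ha hb, hab]
    have hae : ∀ᵐ p ∂Q, p ∈ stdSimplex ℝ Ω := by
      have hmeas : MeasurableSet (stdSimplex ℝ Ω)ᶜ :=
        (isClosed_stdSimplex ℝ Ω).measurableSet.compl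
      refine (ae_iff).mpr ?_
      simp only [hQdef, Measure.add_apply, Measure.smul_apply, smul_eq_mul]
      rw [show {p | ¬ p ∈ stdSimplex ℝ Ω} = (stdSimplex ℝ Ω)ᶜ from rfl,
        Measure.dirac_apply' _ hmeas, Measure.dirac_apply' _ hmeas]
      simp [Set.indicator_of_notMem, hx, hy]
    -- integral of any function against Q
    have key : ∀ φ : (Ω → ℝ) → ℝ, (∫ p, φ p ∂Q) = a * φ x + b * φ y := by
      intro φ
      have hix : Integrable φ (Measure.dirac x) :=
        (integrable_const (φ x)).congr (ae_eq_dirac φ).symm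
      have hiy : Integrable φ (Measure.dirac y) :=
        (integrable_const (φ y)).congr (ae_eq_dirac φ).symm
      rw [hQdef, integral_add_measure (hix.smul_measure ENNReal.ofReal_ne_top)
        (hiy.smul_measure ENNReal.ofReal_ne_top), integral_smul_measure,
        integral_smul_measure, integral_dirac, integral_dirac,
        ENNReal.toReal_ofReal ha, ENNReal.toReal_ofReal hb]
      simp
    have hbar : (fun ω => ∫ p, p ω ∂Q) = a • x + b • y := by
      funext ω
      rw [key (fun p => p ω)]
      simp [smul_eq_mul]
    have := hdom Q hprob hae
    rw [key f, key g, hbar] at this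
    have := sub_le_sub_iff.mpr this
    simp only [smul_eq_mul]
    nlinarith [this]
  · -- convexity of f - g → dominance
    intro hconv Q hQprob hQae
    haveI := hQprob
    have hif : Integrable f Q := integrable_of_contOn_simplex f hfcont Q hQae
    have hig : Integrable g Q := integrable_of_contOn_simplex g hgcont Q hQae
    have hiid : Integrable (fun p : Ω → ℝ => p) Q := by
      refine Integrable.mono' (integrable_const (1 : ℝ))
        continuous_id.aestronglyMeasurable (hQae.mono fun p hp => ?_)
      rw [pi_norm_le_iff_of_nonneg zero_le_one]
      intro ω
      rw [Real.norm_eq_abs, abs_of_nonneg (hp.1 ω)]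
      calc p ω ≤ ∑ ω', p ω' := Finset.single_le_sum (fun i _ => hp.1 i) (Finset.mem_univ ω)
        _ = 1 := hp.2
    have hbar : (fun ω => ∫ p, p ω ∂Q) = ∫ p, p ∂Q := by
      funext ω
      exact ((ContinuousLinearMap.proj (R := ℝ) (φ := fun _ : Ω => ℝ) ω).integral_comp_comm
        hiid)
    have hjensen := hconv.map_integral_le (hfcont.sub hgcont) (isClosed_stdSimplex ℝ Ω)
      hQae hiid (by exact hif.sub hig)
    rw [integral_sub hif hig] at hjensen
    rw [hbar]
    linarith
end

section
/- The epigraph of the positively homogeneous extension is the closure of the dilated epigraph: with f : Δ(Ω) → ℝ continuous convex and f̃ its positively homogeneous extension (f̃(0)=0, f̃(y)=⟨y,1⟩f(y/⟨y,1⟩) on ℝ₊^Ω\{0}, +∞ elsewhere), one has epi f̃ = closure(ℝ₊₊ · epi f). Consequently f̃ is lower semicontinuous and convex. -/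
open scoped BigOperators Classical

lemma lsc_of_closed_epi {α : Type*} [TopologicalSpace α] (f : α → EReal)
    (hbot : ∀ x, ⊥ < f x)
    (h : IsClosed {p : α × ℝ | f p.1 ≤ (p.2 : EReal)}) :
    LowerSemicontinuous f := by
  intro x c hc
  rcases eq_bot_or_bot_lt c with rfl | hcbot
  · exact Filter.Eventually.of_forall fun y => hbot y
  lift c to ℝ using ⟨(hc.trans_le le_top).ne, hcbot.ne'⟩
  obtain ⟨r, hcr, hrx⟩ : ∃ r : ℝ, c < r ∧ (r : EReal) < f x := by
    rcases eq_top_or_lt_top (f x) with htop | hlt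
    · exact ⟨c + 1, by linarith, htop ▸ EReal.coe_lt_top _⟩
    · lift f x to ℝ using ⟨hlt.ne, (hbot x).ne'⟩ with v hv
      obtain ⟨r, h1, h2⟩ := exists_between (EReal.coe_lt_coe_iff.1 hc)
      exact ⟨r, h1, EReal.coe_lt_coe_iff.2 h2⟩
  have hopen : IsOpen {p : α × ℝ | ¬ f p.1 ≤ (p.2 : EReal)} := h.isOpen_compl
  have hx : (x, r) ∈ {p : α × ℝ | ¬ f p.1 ≤ (p.2 : EReal)} := fun hle => absurd hrx (not_lt.2 hle)
  have hnb : {y | ¬ f y ≤ (r : EReal)} ∈ nhds x := by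
    have := (hopen.preimage (Continuous.prodMk_left r)).mem_nhds (by simpa using hx)
    simpa using this
  filter_upwards [hnb] with y hy
  exact lt_trans (EReal.coe_lt_coe_iff.2 hcr) (not_le.1 hy)


/-- The positively homogeneous extension `f̃` of `f : Δ(Ω) → ℝ`:
`f̃(0) = 0`, `f̃(y) = ⟨y,1⟩ f(y/⟨y,1⟩)` for `y ∈ ℝ₊^Ω \ {0}`, and `+∞` otherwise. -/
noncomputable def posHomExt {Ω : Type*} [Fintype Ω] (f : (Ω → ℝ) → ℝ) :
    (Ω → ℝ) → EReal := fun y =>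
  if y = 0 then 0
  else if ∀ ω, 0 ≤ y ω then (((∑ ω, y ω) * f ((∑ ω, y ω)⁻¹ • y) : ℝ) : EReal)
  else ⊤

section main
variable {Ω : Type*} [Fintype Ω] [Nonempty Ω] (f : (Ω → ℝ) → ℝ)

private noncomputable def gg : (Ω → ℝ) → ℝ := fun y => (∑ ω, y ω) * f ((∑ ω, y ω)⁻¹ • y)

private lemma sum_pos_of_ne {y : Ω → ℝ} (hy : ∀ ω, 0 ≤ y ω) (h0 : y ≠ 0) :
    0 < ∑ ω, y ω := by
  rcases Function.ne_iff.1 h0 with ⟨ω, hω⟩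
  exact Finset.sum_pos' (fun i _ => hy i) ⟨ω, Finset.mem_univ ω, lt_of_le_of_ne (hy ω) (Ne.symm (by simpa using hω))⟩

private lemma mem_simplex_of {y : Ω → ℝ} (hy : ∀ ω, 0 ≤ y ω) (h0 : y ≠ 0) :
    (∑ ω, y ω)⁻¹ • y ∈ stdSimplex ℝ Ω := by
  have hs := sum_pos_of_ne hy h0
  constructor
  · intro ω
    exact mul_nonneg (inv_nonneg.2 hs.le) (hy ω)
  · simp only [Pi.smul_apply, smul_eq_mul]
    rw [← Finset.mul_sum, inv_mul_cancel₀ hs.ne']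

private lemma mem_epi_iff (q : (Ω → ℝ) × ℝ) :
    posHomExt f q.1 ≤ (q.2 : EReal) ↔ (∀ ω, 0 ≤ q.1 ω) ∧ gg f q.1 ≤ q.2 := by
  obtain ⟨y, t⟩ := q
  by_cases h0 : y = 0
  · subst h0
    simp only [posHomExt, eq_self_iff_true, if_true, gg, Pi.zero_apply, Finset.sum_const_zero, zero_mul]
    constructor
    · intro h; exact ⟨fun ω => le_refl 0, by exact_mod_cast h⟩
    · rintro ⟨-, h⟩; exact_mod_cast h
  · by_cases hy : ∀ ω, 0 ≤ y ω
    · simp only [posHomExt, if_neg h0, if_pos hy, gg, EReal.coe_le_coe_iff]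
      tauto
    · simp only [posHomExt, if_neg h0, if_neg hy, gg]
      simp only [top_le_iff]
      constructor
      · intro h; exact absurd h (EReal.coe_ne_top t)
      · tauto

private lemma gg_continuousOn (hcont : ContinuousOn f (stdSimplex ℝ Ω)) :
    ContinuousOn (gg f) {y : Ω → ℝ | ∀ ω, 0 ≤ y ω} := by
  have hsum : Continuous (fun y : Ω → ℝ => ∑ ω, y ω) :=
    continuous_finset_sum _ fun ω _ => continuous_apply ω
  intro y hy
  by_cases h0 : y = 0
  · subst h0
    obtain ⟨M, hM⟩ := (isCompact_stdSimplex ℝ Ω).exists_bound_of_continuousOn hcont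
    have hgg0 : gg f 0 = 0 := by simp [gg]
    rw [ContinuousWithinAt, hgg0]
    apply squeeze_zero_norm' (a := fun y => (∑ ω, y ω) * M)
    · filter_upwards [self_mem_nhdsWithin] with z hz
      by_cases hz0 : z = 0
      · subst hz0; simp [gg]
      · have hs := sum_pos_of_ne hz hz0
        have hp := mem_simplex_of hz hz0
        have : ‖gg f z‖ = (∑ ω, z ω) * ‖f ((∑ ω, z ω)⁻¹ • z)‖ := by
          rw [gg, norm_mul, Real.norm_of_nonneg hs.le]
        rw [this]
        exact mul_le_mul_of_nonneg_left (hM _ hp) hs.le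
    · have : Filter.Tendsto (fun y : Ω → ℝ => (∑ ω, y ω) * M) (nhds 0) (nhds ((∑ ω, (0:Ω→ℝ) ω) * M)) :=
        (hsum.tendsto 0).mul_const M
      simp only [Pi.zero_apply, Finset.sum_const_zero, zero_mul] at this
      exact this.mono_left nhdsWithin_le_nhds
  · have hs : 0 < ∑ ω, y ω := sum_pos_of_ne hy h0
    have hU : {z : Ω → ℝ | 0 < ∑ ω, z ω} ∈ nhds y :=
      (isOpen_lt continuous_const hsum).mem_nhds hs
    rw [← continuousWithinAt_inter hU]
    have hinner : ContinuousAt (fun z : Ω → ℝ => (∑ ω, z ω)⁻¹ • z) y :=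
      (((hsum.tendsto y).inv₀ hs.ne')).smul (continuous_id.tendsto y)
    have hmaps : Set.MapsTo (fun z : Ω → ℝ => (∑ ω, z ω)⁻¹ • z)
        ({y : Ω → ℝ | ∀ ω, 0 ≤ y ω} ∩ {z : Ω → ℝ | 0 < ∑ ω, z ω}) (stdSimplex ℝ Ω) := by
      rintro z ⟨hz1, hz2⟩
      refine mem_simplex_of hz1 fun hz0 => ?_
      rw [hz0] at hz2; simp at hz2
    have hf : ContinuousWithinAt f (stdSimplex ℝ Ω) ((∑ ω, y ω)⁻¹ • y) :=
      hcont _ (mem_simplex_of hy h0)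
    have hcomp := ContinuousWithinAt.comp (g := f)
      (f := fun z : Ω → ℝ => (∑ ω, z ω)⁻¹ • z) hf hinner.continuousWithinAt hmaps
    have := (hsum.continuousWithinAt (s := {y : Ω → ℝ | ∀ ω, 0 ≤ y ω} ∩ {z : Ω → ℝ | 0 < ∑ ω, z ω})).mul hcomp
    exact this
end main

/-- For `f` continuous and convex on the simplex, the epigraph of its positively
homogeneous extension is the closure of the dilated epigraph `ℝ₊₊ • epi f`;
consequently `f̃` is lower semicontinuous and its epigraph is convex. -/
theorem posHomExt_epigraph_closure {Ω : Type*} [Fintype Ω] [Nonempty Ω]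
    (f : (Ω → ℝ) → ℝ)
    (hcont : ContinuousOn f (stdSimplex ℝ Ω))
    (hconv : ConvexOn ℝ (stdSimplex ℝ Ω) f) :
    {q : (Ω → ℝ) × ℝ | posHomExt f q.1 ≤ (q.2 : EReal)}
        = closure {q : (Ω → ℝ) × ℝ | ∃ l : ℝ, 0 < l ∧
            ∃ r ∈ {r : (Ω → ℝ) × ℝ | r.1 ∈ stdSimplex ℝ Ω ∧ f r.1 ≤ r.2}, q = l • r} ∧
    LowerSemicontinuous (posHomExt f) ∧
    Convex ℝ {q : (Ω → ℝ) × ℝ | posHomExt f q.1 ≤ (q.2 : EReal)} := by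
  set S : Set ((Ω → ℝ) × ℝ) := {r | r.1 ∈ stdSimplex ℝ Ω ∧ f r.1 ≤ r.2} with hS
  set C : Set ((Ω → ℝ) × ℝ) := {q | ∃ l : ℝ, 0 < l ∧ ∃ r ∈ S, q = l • r} with hC
  set E : Set ((Ω → ℝ) × ℝ) := {q | posHomExt f q.1 ≤ (q.2 : EReal)} with hE
  -- E is closed
  have hK : IsClosed {y : Ω → ℝ | ∀ ω, 0 ≤ y ω} := by
    have : {y : Ω → ℝ | ∀ ω, 0 ≤ y ω} = ⋂ ω, {y : Ω → ℝ | 0 ≤ y ω} := by ext; simp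
    rw [this]
    exact isClosed_iInter fun ω => isClosed_le continuous_const (continuous_apply ω)
  have hEeq : E = ({y : Ω → ℝ | ∀ ω, 0 ≤ y ω} ×ˢ Set.univ) ∩
      ((fun q : (Ω → ℝ) × ℝ => gg f q.1 - q.2) ⁻¹' Set.Iic 0) := by
    ext q
    rw [hE, Set.mem_setOf_eq, mem_epi_iff f q]
    simp [sub_nonpos]
  have hgcont : ContinuousOn (fun q : (Ω → ℝ) × ℝ => gg f q.1 - q.2)
      ({y : Ω → ℝ | ∀ ω, 0 ≤ y ω} ×ˢ Set.univ) :=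
    ((gg_continuousOn f hcont).comp continuous_fst.continuousOn
      (fun q hq => hq.1)).sub continuous_snd.continuousOn
  have h2 : IsClosed E := by
    rw [hEeq]
    exact hgcont.preimage_isClosed_of_isClosed (hK.prod isClosed_univ) isClosed_Iic
  -- C ⊆ E
  have h1 : C ⊆ E := by
    rintro q ⟨l, hl, ⟨p, t⟩, ⟨hpΔ, hft⟩, rfl⟩
    rw [hE, Set.mem_setOf_eq, mem_epi_iff]
    have hsum : ∑ ω, (l • (p, t) : (Ω → ℝ) × ℝ).1 ω = l := by
      simp only [Prod.smul_fst, Pi.smul_apply, smul_eq_mul, ← Finset.mul_sum, hpΔ.2, mul_one]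
    constructor
    · intro ω; exact mul_nonneg hl.le (hpΔ.1 ω)
    · rw [gg, hsum]
      have : (l⁻¹ • (l • (p, t) : (Ω → ℝ) × ℝ).1) = p := by
        rw [Prod.smul_fst, inv_smul_smul₀ hl.ne']
      rw [this]
      calc l * f p ≤ l * t := by exact mul_le_mul_of_nonneg_left hft hl.le
        _ = (l • (p, t) : (Ω → ℝ) × ℝ).2 := rfl
  -- E ⊆ closure C
  have h3 : E ⊆ closure C := by
    intro q hq
    rw [hE, Set.mem_setOf_eq, mem_epi_iff] at hq
    obtain ⟨hnn, hle⟩ := hq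
    by_cases hq0 : q.1 = 0
    · -- q = (0, t) with t ≥ 0
      have ht : 0 ≤ q.2 := by
        have : gg f q.1 = 0 := by rw [hq0]; simp [gg]
        linarith [hle, this.symm.le]
      obtain ⟨ω₀⟩ := ‹Nonempty Ω›
      set p₀ : Ω → ℝ := Pi.single ω₀ 1 with hp₀def
      have hp₀ : p₀ ∈ stdSimplex ℝ Ω := single_mem_stdSimplex ℝ ω₀
      have key : Filter.Tendsto (fun l : ℝ => ((l • p₀, l * f p₀ + q.2) : (Ω → ℝ) × ℝ))
          (nhdsWithin 0 (Set.Ioi 0)) (nhds (0, q.2)) := by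
        apply Filter.Tendsto.prodMk_nhds
        · have : Filter.Tendsto (fun l : ℝ => l • p₀) (nhds 0) (nhds ((0:ℝ) • p₀)) :=
            (continuous_id.smul continuous_const).tendsto 0
          rw [zero_smul] at this
          exact this.mono_left nhdsWithin_le_nhds
        · have : Filter.Tendsto (fun l : ℝ => l * f p₀ + q.2) (nhds 0)
              (nhds (0 * f p₀ + q.2)) :=
            ((continuous_id.mul continuous_const).add continuous_const).tendsto 0
          rw [zero_mul, zero_add] at this
          exact this.mono_left nhdsWithin_le_nhds
      have hmem : ∀ l ∈ Set.Ioi (0:ℝ), ((l • p₀, l * f p₀ + q.2) : (Ω → ℝ) × ℝ) ∈ C := by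
        intro l hl
        have hl' : (0:ℝ) < l := hl
        refine ⟨l, hl, (p₀, f p₀ + q.2 / l), ⟨hp₀, le_add_of_nonneg_right (by positivity)⟩, ?_⟩
        have h2nd : l * f p₀ + q.2 = l * (f p₀ + q.2 / l) := by
          rw [mul_add, mul_div_cancel₀ _ hl'.ne']
        simp only [Prod.smul_mk, smul_eq_mul, Prod.mk.injEq]
        exact ⟨trivial, h2nd⟩
      have : ((0 : Ω → ℝ), q.2) ∈ closure C :=
        mem_closure_of_tendsto key
          (Filter.eventually_iff_exists_mem.2 ⟨Set.Ioi 0, self_mem_nhdsWithin, hmem⟩)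
      have hq' : q = ((0 : Ω → ℝ), q.2) := Prod.ext hq0 rfl
      rw [hq']; exact this
    · have hs : 0 < ∑ ω, q.1 ω := sum_pos_of_ne hnn hq0
      apply subset_closure
      refine ⟨∑ ω, q.1 ω, hs, ((∑ ω, q.1 ω)⁻¹ • q.1, (∑ ω, q.1 ω)⁻¹ * q.2),
        ⟨mem_simplex_of hnn hq0, ?_⟩, ?_⟩
      · have hle' : f ((∑ ω, q.1 ω)⁻¹ • q.1) ≤ (∑ ω, q.1 ω)⁻¹ * q.2 := by
          rw [inv_mul_eq_div, le_div_iff₀ hs, mul_comm]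
          exact hle
        exact hle'
      · have hfst : q.1 = (∑ ω, q.1 ω) • (∑ ω, q.1 ω)⁻¹ • q.1 := by
          rw [smul_inv_smul₀ hs.ne']
        have hsnd : q.2 = (∑ ω, q.1 ω) * ((∑ ω, q.1 ω)⁻¹ * q.2) := by
          field_simp
        calc q = (q.1, q.2) := rfl
          _ = ((∑ ω, q.1 ω) • (∑ ω, q.1 ω)⁻¹ • q.1, (∑ ω, q.1 ω) * ((∑ ω, q.1 ω)⁻¹ * q.2)) := by
              rw [← hfst, ← hsnd]
          _ = (∑ ω, q.1 ω) • ((∑ ω, q.1 ω)⁻¹ • q.1, (∑ ω, q.1 ω)⁻¹ * q.2) := rfl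
  have heq : E = closure C := Set.Subset.antisymm h3 (closure_minimal h1 h2)
  have hbot : ∀ y : Ω → ℝ, ⊥ < posHomExt f y := by
    intro y
    unfold posHomExt
    split_ifs
    · exact EReal.bot_lt_coe 0
    · exact EReal.bot_lt_coe _
    · exact bot_lt_top
  have hSconv : Convex ℝ S := hconv.convex_epigraph
  have hCconv : Convex ℝ C := by
    rintro q1 ⟨l1, hl1, r1, hr1, rfl⟩ q2 ⟨l2, hl2, r2, hr2, rfl⟩ a b ha hb hab
    rcases eq_or_lt_of_le ha with rfl | ha'
    · rw [zero_add] at hab; subst hab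
      have hm : l2 • r2 ∈ C := ⟨l2, hl2, r2, hr2, rfl⟩
      simpa using hm
    rcases eq_or_lt_of_le hb with rfl | hb'
    · rw [add_zero] at hab; subst hab
      have hm : l1 • r1 ∈ C := ⟨l1, hl1, r1, hr1, rfl⟩
      simpa using hm
    have hν : 0 < a * l1 + b * l2 := by positivity
    set ν := a * l1 + b * l2 with hνdef
    refine ⟨ν, hν, (a * l1 / ν) • r1 + (b * l2 / ν) • r2,
      hSconv hr1 hr2 (by positivity) (by positivity) (by field_simp; exact hνdef.symm), ?_⟩
    have e1 : ν * (a * l1 / ν) = a * l1 := by field_simp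
    have e2 : ν * (b * l2 / ν) = b * l2 := by field_simp
    rw [smul_add, smul_smul, smul_smul, smul_smul, smul_smul, e1, e2]
  exact ⟨heq, lsc_of_closed_epi _ hbot h2, heq ▸ hCconv.closure⟩
end

section
/- Limit points of the dilated epigraph lie in the homogeneous epigraph: let f : Δ(Ω) → ℝ be lower semicontinuous, and suppose sequences p_n ∈ Δ(Ω), λ_n > 0, t_n ≥ 0 are such that (λ_n p_n, λ_n f(p_n) + t_n) converges to (ȳ, z̄) ∈ ℝ^Ω × ℝ. Then ȳ ∈ ℝ₊^Ω, λ_n → ⟨ȳ,1⟩, and there exists p̄ ∈ Δ(Ω) (a limit of a subsequence of p_n) with ȳ = ⟨ȳ,1⟩ p̄ and z̄ ≥ ⟨ȳ,1⟩ f(p̄). -/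
open scoped BigOperators
open Filter

/-- Limit points of the dilated epigraph lie in the homogeneous epigraph: if `f` is
lower semicontinuous on the simplex and `(λ_n p_n, λ_n f(p_n) + t_n) → (ȳ, z̄)` with
`p_n ∈ Δ(Ω)`, `λ_n > 0`, `t_n ≥ 0`, then `ȳ ≥ 0`, `λ_n → ⟨ȳ,1⟩`, and some subsequence
of `p_n` converges to a point `p̄ ∈ Δ(Ω)` with `ȳ = ⟨ȳ,1⟩ p̄` and `z̄ ≥ ⟨ȳ,1⟩ f(p̄)`. -/
theorem limit_points_dilated_epigraph {Ω : Type*} [Fintype Ω] [Nonempty Ω]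
    (f : (Ω → ℝ) → ℝ) (hlsc : LowerSemicontinuousOn f (stdSimplex ℝ Ω))
    (p : ℕ → Ω → ℝ) (hp : ∀ n, p n ∈ stdSimplex ℝ Ω)
    (l : ℕ → ℝ) (hl : ∀ n, 0 < l n)
    (t : ℕ → ℝ) (ht : ∀ n, 0 ≤ t n)
    (ybar : Ω → ℝ) (zbar : ℝ)
    (hconv : Tendsto (fun n => (l n • p n, l n * f (p n) + t n))
      atTop (nhds (ybar, zbar))) :
    (∀ ω, 0 ≤ ybar ω) ∧
    Tendsto l atTop (nhds (∑ ω, ybar ω)) ∧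
    ∃ pbar ∈ stdSimplex ℝ Ω,
      (∃ φ : ℕ → ℕ, StrictMono φ ∧ Tendsto (fun n => p (φ n)) atTop (nhds pbar)) ∧
      ybar = (∑ ω, ybar ω) • pbar ∧
      zbar ≥ (∑ ω, ybar ω) * f pbar := by
  have h1 : Tendsto (fun n => l n • p n) atTop (nhds ybar) :=
    (continuous_fst.tendsto _).comp hconv
  have h2 : Tendsto (fun n => l n * f (p n) + t n) atTop (nhds zbar) :=
    (continuous_snd.tendsto _).comp hconv
  have hω : ∀ ω, Tendsto (fun n => l n * p n ω) atTop (nhds (ybar ω)) := by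
    intro ω
    have := ((continuous_apply ω).tendsto ybar).comp h1
    simpa [Function.comp_def, smul_eq_mul] using this
  have hnn : ∀ ω, 0 ≤ ybar ω := fun ω =>
    ge_of_tendsto' (hω ω) (fun n => mul_nonneg (hl n).le ((hp n).1 ω))
  set s := ∑ ω, ybar ω with hs
  have hsnn : 0 ≤ s := Finset.sum_nonneg fun ω _ => hnn ω
  have hrep : ∀ n, l n = ∑ ω, l n * p n ω := fun n => by
    rw [← Finset.mul_sum, (hp n).2, mul_one]
  have hls : Tendsto l atTop (nhds s) := by
    have h := tendsto_finset_sum (Finset.univ : Finset Ω) (fun ω _ => hω ω)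
    simp only [← hrep] at h
    exact h
  obtain ⟨pbar, hpmem, φ, hφ, hpt⟩ := (isCompact_stdSimplex ℝ Ω).tendsto_subseq hp
  refine ⟨hnn, hls, pbar, hpmem, ⟨φ, hφ, hpt⟩, ?_, ?_⟩
  · -- ybar = s • pbar
    have hlφ : Tendsto (fun n => l (φ n)) atTop (nhds s) := hls.comp hφ.tendsto_atTop
    have hlim : Tendsto (fun n => l (φ n) • p (φ n)) atTop (nhds (s • pbar)) :=
      hlφ.smul hpt
    have hlim' : Tendsto (fun n => l (φ n) • p (φ n)) atTop (nhds ybar) :=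
      h1.comp hφ.tendsto_atTop
    exact tendsto_nhds_unique hlim' hlim
  · -- zbar ≥ s * f pbar
    have key : ∀ ε > (0:ℝ), s * f pbar ≤ zbar + s * ε := by
      intro ε hε
      have hev : ∀ᶠ n in atTop, f pbar - ε < f (p (φ n)) := by
        have hlsc' := hlsc pbar hpmem (f pbar - ε) (by linarith)
        have htn : Tendsto (fun n => p (φ n)) atTop (nhdsWithin pbar (stdSimplex ℝ Ω)) :=
          tendsto_nhdsWithin_of_tendsto_nhds_of_eventually_within _ hpt
            (Eventually.of_forall fun n => hp (φ n))
        exact htn.eventually hlsc'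
      have hle : ∀ᶠ n in atTop,
          l (φ n) * (f pbar - ε) ≤ l (φ n) * f (p (φ n)) + t (φ n) := by
        filter_upwards [hev] with n hn
        have := mul_le_mul_of_nonneg_left hn.le (hl (φ n)).le
        linarith [ht (φ n)]
      have hA : Tendsto (fun n => l (φ n) * (f pbar - ε)) atTop
          (nhds (s * (f pbar - ε))) :=
        (hls.comp hφ.tendsto_atTop).mul_const _
      have hB : Tendsto (fun n => l (φ n) * f (p (φ n)) + t (φ n)) atTop (nhds zbar) :=
        h2.comp hφ.tendsto_atTop
      have h := le_of_tendsto_of_tendsto hA hB hle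
      have := mul_sub s (f pbar) ε
      linarith
    rcases hsnn.eq_or_lt with hs0 | hs0
    · have := key 1 one_pos
      simp only [← hs0] at this ⊢
      simpa using this
    · refine le_of_forall_pos_le_add fun ε hε => ?_
      have h := key (ε / s) (div_pos hε hs0)
      have : s * (ε / s) = ε := by field_simp
      linarith
end

section
/- Main theorem, direction 1 (separability implies more valuable information): let U_L : A_L × Ω → ℝ and U_N : A_N × Ω → ℝ have finite-valued value functions on Δ(Ω), and let U_M : A_M × Ω → ℝ be any decision problem whose value function equals V_{U_L} + V_{U_N} on Δ(Ω). Then for every Borel probability measure Q on Δ(Ω), VoI_{U_M}(Q) ≥ VoI_{U_L}(Q), where VoI_U(Q) = ∫ V_U dQ − V_U(∫ p dQ(p)). -/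
open scoped BigOperators
open MeasureTheory Filter Topology

section aux

variable {Ω A : Type*} [Fintype Ω] [Nonempty Ω] [Nonempty A]

/-- The value function is bounded on the simplex by an explicit constant, and moreover
there is a measurable function agreeing with it on the simplex. -/
lemma value_exists_measurable (U : A → Ω → ℝ)
    (hfin : ∀ p ∈ stdSimplex ℝ Ω, BddAbove (Set.range fun a : A => ∑ ω, p ω * U a ω)) :
    ∃ (g : (Ω → ℝ) → ℝ) (C : ℝ), Measurable g ∧
      (∀ p ∈ stdSimplex ℝ Ω, g p = ⨆ a : A, ∑ ω, p ω * U a ω) ∧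
      (∀ p ∈ stdSimplex ℝ Ω, |⨆ a : A, ∑ ω, p ω * U a ω| ≤ C) := by
  classical
  -- vertex membership
  have hvert : ∀ ω : Ω, (fun ω' => if ω' = ω then (1:ℝ) else 0) ∈ stdSimplex ℝ Ω := by
    intro ω
    constructor
    · intro ω'; dsimp; split <;> norm_num
    · simp
  have hvertsum : ∀ (a : A) (ω : Ω),
      (∑ ω', (if ω' = ω then (1:ℝ) else 0) * U a ω') = U a ω := by
    intro a ω
    simp [ite_mul]
  -- C ω bounds U a ω
  have hbddC : ∀ ω : Ω, BddAbove (Set.range fun a : A => U a ω) := by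
    intro ω
    have h := hfin _ (hvert ω)
    have heq : (fun a : A => ∑ ω', (if ω' = ω then (1:ℝ) else 0) * U a ω')
        = fun a : A => U a ω := funext fun a => hvertsum a ω
    rwa [heq] at h
  set C : Ω → ℝ := fun ω => ⨆ a : A, U a ω with hC
  have hUC : ∀ (a : A) (ω : Ω), U a ω ≤ C ω := fun a ω => le_ciSup (hbddC ω) a
  set Cmax : ℝ := Finset.univ.sup' Finset.univ_nonempty C with hCmax
  have hCle : ∀ ω, C ω ≤ Cmax := fun ω => Finset.le_sup' C (Finset.mem_univ ω)
  -- linear functionals bounded above by Cmax on simplex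
  have hlin : ∀ p ∈ stdSimplex ℝ Ω, ∀ a : A, (∑ ω, p ω * U a ω) ≤ Cmax := by
    intro p hp a
    calc (∑ ω, p ω * U a ω) ≤ ∑ ω, p ω * Cmax := by
          refine Finset.sum_le_sum fun ω _ => ?_
          exact mul_le_mul_of_nonneg_left ((hUC a ω).trans (hCle ω)) (hp.1 ω)
      _ = Cmax := by rw [← Finset.sum_mul, hp.2, one_mul]
  -- choose a countable dense family inside the range of U
  have : Nonempty (Set.range U) := ⟨⟨U Classical.ofNonempty, Set.mem_range_self _⟩⟩
  obtain ⟨s, hsc, hsd⟩ := TopologicalSpace.exists_countable_dense (Set.range U)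
  have hsne : s.Nonempty := hsd.nonempty
  obtain ⟨f, hf⟩ := hsc.exists_eq_range hsne
  set u : ℕ → Ω → ℝ := fun n => ((f n : Set.range U) : Ω → ℝ) with hu
  have huT : ∀ n, ∃ a : A, u n = U a := by
    intro n
    obtain ⟨a, ha⟩ := (f n).2
    exact ⟨a, ha.symm⟩
  -- every U a is a limit of a sequence from range u
  have hseq : ∀ a : A, ∃ v : ℕ → Ω → ℝ,
      (∀ k, ∃ n, v k = u n) ∧ Tendsto v atTop (𝓝 (U a)) := by
    intro a
    have hmem : (⟨U a, Set.mem_range_self a⟩ : Set.range U) ∈ closure s := hsd _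
    obtain ⟨x, hxs, hxt⟩ := mem_closure_iff_seq_limit.mp hmem
    refine ⟨fun k => (x k : Ω → ℝ), ?_, ?_⟩
    · intro k
      have := hxs k
      rw [hf] at this
      obtain ⟨n, hn⟩ := this
      exact ⟨n, congrArg Subtype.val hn.symm⟩
    · exact (continuous_subtype_val.tendsto _).comp hxt
  -- the capped linear functionals
  set F : ℕ → (Ω → ℝ) → ℝ := fun n p => min (∑ ω, p ω * u n ω) Cmax with hF
  have hFcont : ∀ n, Continuous (F n) := by
    intro n
    exact Continuous.min (continuous_finset_sum _ fun ω _ =>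
      (continuous_apply ω).mul continuous_const) continuous_const
  have hFbdd : ∀ p, BddAbove (Set.range fun n => F n p) := by
    intro p
    exact ⟨Cmax, by rintro x ⟨n, rfl⟩; exact min_le_right _ _⟩
  set g : (Ω → ℝ) → ℝ := fun p => ⨆ n, F n p with hg
  have hFg : ∀ n p, F n p ≤ g p := fun n p => le_ciSup (hFbdd p) n
  -- partial sups
  set h : ℕ → (Ω → ℝ) → ℝ := fun n p => (Finset.range (n+1)).sup'
    (Finset.nonempty_range_iff.mpr (Nat.succ_ne_zero n)) (fun k => F k p) with hh
  have hhmeas : ∀ n, Measurable (h n) := by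
    intro n
    exact (Continuous.finset_sup'_apply _ fun k _ => hFcont k).measurable
  have hhg : ∀ n p, h n p ≤ g p := by
    intro n p
    exact Finset.sup'_le _ _ fun k _ => hFg k p
  have hFh : ∀ n p, F n p ≤ h n p := by
    intro n p
    exact Finset.le_sup' (fun k => F k p) (Finset.mem_range.mpr (Nat.lt_succ_self n))
  have hhmono : ∀ p, Monotone fun n => h n p := by
    intro p m n hmn
    refine Finset.sup'_le _ _ fun k hk => Finset.le_sup' (fun k => F k p) ?_
    simp only [Finset.mem_range] at hk ⊢
    omega
  have htend : ∀ p, Tendsto (fun n => h n p) atTop (𝓝 (g p)) := by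
    intro p
    have hbdd : BddAbove (Set.range fun n => h n p) :=
      ⟨g p, by rintro x ⟨n, rfl⟩; exact hhg n p⟩
    have := tendsto_atTop_ciSup (hhmono p) hbdd
    have hEq : (⨆ n, h n p) = g p := by
      refine le_antisymm (ciSup_le fun n => hhg n p) (ciSup_le fun n => ?_)
      exact (hFh n p).trans (le_ciSup hbdd n)
    rwa [hEq] at this
  have hgmeas : Measurable g :=
    measurable_of_tendsto_metrizable hhmeas (tendsto_pi_nhds.mpr htend)
  set cmin : ℝ := Finset.univ.inf' Finset.univ_nonempty (U Classical.ofNonempty) with hcmin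
  refine ⟨g, max Cmax (-cmin), hgmeas, ?_, ?_⟩
  · -- g agrees with the value function on the simplex
    intro p hp
    refine le_antisymm (ciSup_le fun n => ?_) (ciSup_le fun a => ?_)
    · obtain ⟨a, ha⟩ := huT n
      have : F n p ≤ ∑ ω, p ω * U a ω := by rw [hF]; simp only [ha]; exact min_le_left _ _
      exact this.trans (le_ciSup (hfin p hp) a)
    · obtain ⟨v, hvmem, hvt⟩ := hseq a
      have hφ : Continuous fun w : Ω → ℝ => min (∑ ω, p ω * w ω) Cmax :=
        Continuous.min (continuous_finset_sum _ fun ω _ =>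
          continuous_const.mul (continuous_apply ω)) continuous_const
      have hlim : Tendsto (fun k => min (∑ ω, p ω * v k ω) Cmax) atTop
          (𝓝 (min (∑ ω, p ω * U a ω) Cmax)) := (hφ.tendsto _).comp hvt
      have hle : ∀ k, min (∑ ω, p ω * v k ω) Cmax ≤ g p := by
        intro k
        obtain ⟨n, hn⟩ := hvmem k
        have : min (∑ ω, p ω * v k ω) Cmax = F n p := by rw [hF, hn]
        rw [this]; exact hFg n p
      have := le_of_tendsto hlim (Eventually.of_forall hle)
      rwa [min_eq_left (hlin p hp a)] at this
  · -- bound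
    intro p hp
    rw [abs_le]
    have h1 : cmin ≤ ∑ ω, p ω * U Classical.ofNonempty ω := by
      calc cmin = ∑ ω, p ω * cmin := by rw [← Finset.sum_mul, hp.2, one_mul]
        _ ≤ _ := Finset.sum_le_sum fun ω _ =>
            mul_le_mul_of_nonneg_left (Finset.inf'_le _ (Finset.mem_univ ω)) (hp.1 ω)
    constructor
    · have h2 : cmin ≤ ⨆ a : A, ∑ ω, p ω * U a ω := h1.trans (le_ciSup (hfin p hp) _)
      have h3 : -(max Cmax (-cmin)) ≤ cmin := by
        have := neg_le_neg (le_max_right Cmax (-cmin))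
        simpa using this
      linarith
    · exact (ciSup_le (hlin p hp)).trans (le_max_left _ _)

end aux

/-- Integrability of the value function and Jensen's inequality (information has
nonnegative value). -/
lemma value_integrable_jensen {Ω A : Type*} [Fintype Ω] [Nonempty Ω] [Nonempty A]
    (U : A → Ω → ℝ)
    (hfin : ∀ p ∈ stdSimplex ℝ Ω, BddAbove (Set.range fun a : A => ∑ ω, p ω * U a ω))
    (Q : Measure (Ω → ℝ)) [IsProbabilityMeasure Q]
    (hsupp : ∀ᵐ p ∂Q, p ∈ stdSimplex ℝ Ω) :
    Integrable (fun p => ⨆ a : A, ∑ ω, p ω * U a ω) Q ∧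
      (⨆ a : A, ∑ ω, (∫ p, p ω ∂Q) * U a ω) ≤ ∫ p, (⨆ a : A, ∑ ω, p ω * U a ω) ∂Q := by
  obtain ⟨g, C, hgmeas, hgeq, hbd⟩ := value_exists_measurable U hfin
  have hmeas : AEStronglyMeasurable (fun p => ⨆ a : A, ∑ ω, p ω * U a ω) Q := by
    refine hgmeas.aestronglyMeasurable.congr ?_
    filter_upwards [hsupp] with p hp using hgeq p hp
  have hint : Integrable (fun p => ⨆ a : A, ∑ ω, p ω * U a ω) Q := by
    refine Integrable.mono' (integrable_const C) hmeas ?_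
    filter_upwards [hsupp] with p hp
    rw [Real.norm_eq_abs]; exact hbd p hp
  have hXint : ∀ ω : Ω, Integrable (fun p : Ω → ℝ => p ω) Q := by
    intro ω
    refine Integrable.mono' (integrable_const 1) (measurable_pi_apply ω).aestronglyMeasurable ?_
    filter_upwards [hsupp] with p hp
    rw [Real.norm_eq_abs, abs_le]
    refine ⟨by linarith [hp.1 ω], ?_⟩
    calc p ω ≤ ∑ ω', p ω' := Finset.single_le_sum (fun i _ => hp.1 i) (Finset.mem_univ ω)
      _ = 1 := hp.2
  refine ⟨hint, ciSup_le fun a => ?_⟩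
  have hlinint : Integrable (fun p => ∑ ω, p ω * U a ω) Q :=
    integrable_finset_sum _ fun ω _ => (hXint ω).mul_const _
  calc (∑ ω, (∫ p, p ω ∂Q) * U a ω) = ∑ ω, ∫ p, p ω * U a ω ∂Q :=
        Finset.sum_congr rfl fun ω _ => (integral_mul_const _ _).symm
    _ = ∫ p, ∑ ω, p ω * U a ω ∂Q :=
        (integral_finset_sum _ fun ω _ => (hXint ω).mul_const _).symm
    _ ≤ ∫ p, (⨆ a : A, ∑ ω, p ω * U a ω) ∂Q := by
        refine integral_mono_ae hlinint hint ?_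
        filter_upwards [hsupp] with p hp using le_ciSup (hfin p hp) a

/-- Main theorem, direction 1 (separability implies more valuable information):
if the value function of `U_M` equals `V_{U_L} + V_{U_N}` on the simplex (all value
functions being finite, i.e. the suprema bounded above), then for every Borel
probability measure `Q` on the simplex, `VoI_{U_M}(Q) ≥ VoI_{U_L}(Q)`. -/
theorem separability_implies_more_valuable_information
    {Ω AL AN AM : Type*} [Fintype Ω] [Nonempty Ω]
    [Nonempty AL] [Nonempty AN] [Nonempty AM]
    (UL : AL → Ω → ℝ) (UN : AN → Ω → ℝ) (UM : AM → Ω → ℝ)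
    (hLfin : ∀ p ∈ stdSimplex ℝ Ω, BddAbove (Set.range fun a : AL => ∑ ω, p ω * UL a ω))
    (hNfin : ∀ p ∈ stdSimplex ℝ Ω, BddAbove (Set.range fun a : AN => ∑ ω, p ω * UN a ω))
    (hMfin : ∀ p ∈ stdSimplex ℝ Ω, BddAbove (Set.range fun a : AM => ∑ ω, p ω * UM a ω))
    (hsum : ∀ p ∈ stdSimplex ℝ Ω,
      (⨆ a : AM, ∑ ω, p ω * UM a ω)
        = (⨆ a : AL, ∑ ω, p ω * UL a ω) + ⨆ a : AN, ∑ ω, p ω * UN a ω)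
    (Q : Measure (Ω → ℝ)) [IsProbabilityMeasure Q]
    (hsupp : ∀ᵐ p ∂Q, p ∈ stdSimplex ℝ Ω)
    (hbar : (fun ω => ∫ p, p ω ∂Q) ∈ stdSimplex ℝ Ω) :
    (∫ p, (⨆ a : AM, ∑ ω, p ω * UM a ω) ∂Q)
        - (⨆ a : AM, ∑ ω, (∫ p, p ω ∂Q) * UM a ω)
      ≥ (∫ p, (⨆ a : AL, ∑ ω, p ω * UL a ω) ∂Q)
        - ⨆ a : AL, ∑ ω, (∫ p, p ω ∂Q) * UL a ω := by
  obtain ⟨hLint, -⟩ := value_integrable_jensen UL hLfin Q hsupp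
  obtain ⟨hNint, hNjen⟩ := value_integrable_jensen UN hNfin Q hsupp
  have hMint : (∫ p, (⨆ a : AM, ∑ ω, p ω * UM a ω) ∂Q)
      = (∫ p, (⨆ a : AL, ∑ ω, p ω * UL a ω) ∂Q)
        + ∫ p, (⨆ a : AN, ∑ ω, p ω * UN a ω) ∂Q := by
    rw [← integral_add hLint hNint]
    refine integral_congr_ae ?_
    filter_upwards [hsupp] with p hp using hsum p hp
  have hb := hsum _ hbar
  beta_reduce at hb
  linarith [hNjen]
end

section
/- Main theorem, direction 2 (more valuable information implies separability): let U_M : A_M × Ω → ℝ and U_L : A_L × Ω → ℝ have finite-valued value functions V_M, V_L on Δ(Ω), and suppose VoI_{U_M}(Q) ≥ VoI_{U_L}(Q) for every Borel probability measure Q on Δ(Ω). Then there exists a nonempty set C ⊂ ℝ^Ω such that, defining the decision problem U_N : C × Ω → ℝ by U_N(x, ω) = x(ω), the value function of the additively separable problem U_L + U_N on A_L × C coincides with V_M on Δ(Ω): V_M(p) = V_L(p) + sup_{x∈C} ⟨p, x⟩ for all p ∈ Δ(Ω), with the supremum finite. -/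
set_option maxHeartbeats 1000000


open scoped BigOperators
open MeasureTheory

/-- Main theorem, direction 2 (more valuable information implies separability):
if `VoI_{U_M}(Q) ≥ VoI_{U_L}(Q)` for every Borel probability measure `Q` on the simplex
(value functions `V_M, V_L` being finite-valued), then there is a nonempty set
`C ⊂ ℝ^Ω` such that, with the parallel decision problem `U_N(x,ω) = x(ω)` on `C`,
`V_M(p) = V_L(p) + sup_{x ∈ C} ⟨p,x⟩` for all `p` in the simplex, the supremum being
finite. -/
theorem more_valuable_information_implies_separability
    {Ω AL AM : Type*} [Fintype Ω] [Nonempty Ω] [Nonempty AL] [Nonempty AM]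
    (UL : AL → Ω → ℝ) (UM : AM → Ω → ℝ)
    (hLfin : ∀ p ∈ stdSimplex ℝ Ω, BddAbove (Set.range fun a : AL => ∑ ω, p ω * UL a ω))
    (hMfin : ∀ p ∈ stdSimplex ℝ Ω, BddAbove (Set.range fun a : AM => ∑ ω, p ω * UM a ω))
    (hVoI : ∀ (Q : Measure (Ω → ℝ)), IsProbabilityMeasure Q →
      (∀ᵐ p ∂Q, p ∈ stdSimplex ℝ Ω) →
      (∫ p, (⨆ a : AM, ∑ ω, p ω * UM a ω) ∂Q)
          - (⨆ a : AM, ∑ ω, (∫ p, p ω ∂Q) * UM a ω)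
        ≥ (∫ p, (⨆ a : AL, ∑ ω, p ω * UL a ω) ∂Q)
          - ⨆ a : AL, ∑ ω, (∫ p, p ω ∂Q) * UL a ω) :
    ∃ C : Set (Ω → ℝ), C.Nonempty ∧
      ∀ p ∈ stdSimplex ℝ Ω,
        BddAbove ((fun x : Ω → ℝ => ∑ ω, p ω * x ω) '' C) ∧
        (⨆ a : AM, ∑ ω, p ω * UM a ω)
          = (⨆ a : AL, ∑ ω, p ω * UL a ω) + ⨆ x : C, ∑ ω, p ω * (x : Ω → ℝ) ω := by
  classical
  set VM : (Ω → ℝ) → ℝ := fun p => ⨆ a : AM, ∑ ω, p ω * UM a ω with hVMdef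
  set VL : (Ω → ℝ) → ℝ := fun p => ⨆ a : AL, ∑ ω, p ω * UL a ω with hVLdef
  have hVMle : ∀ p ∈ stdSimplex ℝ Ω, ∀ a : AM, (∑ ω, p ω * UM a ω) ≤ VM p := fun p hp a =>
    le_ciSup (hMfin p hp) a
  have hVLle : ∀ p ∈ stdSimplex ℝ Ω, ∀ a : AL, (∑ ω, p ω * UL a ω) ≤ VL p := fun p hp a =>
    le_ciSup (hLfin p hp) a
  have hVMub : ∀ (p : Ω → ℝ) (b : ℝ), (∀ a : AM, (∑ ω, p ω * UM a ω) ≤ b) → VM p ≤ b :=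
    fun p b h => ciSup_le h
  have hVLub : ∀ (p : Ω → ℝ) (b : ℝ), (∀ a : AL, (∑ ω, p ω * UL a ω) ≤ b) → VL p ≤ b :=
    fun p b h => ciSup_le h
  have huniv : (Finset.univ : Finset Ω).Nonempty := Finset.univ_nonempty
  -- vertices of the simplex
  set e : Ω → Ω → ℝ := fun ω j => if ω = j then 1 else 0 with hedef
  have he : ∀ ω, e ω ∈ stdSimplex ℝ Ω := by
    intro ω
    constructor
    · intro j; by_cases h : ω = j <;> simp [hedef, h]
    · simp [hedef]
  have hesum : ∀ (u : Ω → ℝ) (ω : Ω), ∑ ω', e ω ω' * u ω' = u ω := by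
    intro u ω; simp [hedef, ite_mul, Finset.sum_ite_eq]
  -- sum helpers
  have hlin : ∀ (c d : ℝ) (P Q u : Ω → ℝ),
      ∑ ω, (c * P ω + d * Q ω) * u ω = c * ∑ ω, P ω * u ω + d * ∑ ω, Q ω * u ω := by
    intro c d P Q u
    rw [Finset.mul_sum, Finset.mul_sum, ← Finset.sum_add_distrib]
    exact Finset.sum_congr rfl fun ω _ => by ring
  have hconst : ∀ p ∈ stdSimplex ℝ Ω, ∀ c : ℝ, ∑ ω, p ω * c = c := by
    intro p hp c
    rw [← Finset.sum_mul, hp.2, one_mul]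
  -- bounds for the value functions on the simplex
  have hUMb : ∀ (a : AM) (ω : Ω), UM a ω ≤ VM (e ω) := by
    intro a ω
    have h := hVMle (e ω) (he ω) a
    rwa [hesum] at h
  have hULb : ∀ (a : AL) (ω : Ω), UL a ω ≤ VL (e ω) := by
    intro a ω
    have h := hVLle (e ω) (he ω) a
    rwa [hesum] at h
  set MM : ℝ := Finset.univ.sup' huniv (fun ω => VM (e ω)) with hMMdef
  set ML : ℝ := Finset.univ.sup' huniv (fun ω => VL (e ω)) with hMLdef
  have hVMmax : ∀ p ∈ stdSimplex ℝ Ω, VM p ≤ MM := by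
    intro p hp
    apply hVMub
    intro a
    calc ∑ ω, p ω * UM a ω ≤ ∑ ω, p ω * MM := by
          refine Finset.sum_le_sum fun ω _ => mul_le_mul_of_nonneg_left ?_ (hp.1 ω)
          refine le_trans (hUMb a ω) ?_
          rw [hMMdef]
          exact Finset.le_sup' (fun ω => VM (e ω)) (Finset.mem_univ ω)
      _ = MM := hconst p hp MM
  have hVLmax : ∀ p ∈ stdSimplex ℝ Ω, VL p ≤ ML := by
    intro p hp
    apply hVLub
    intro a
    calc ∑ ω, p ω * UL a ω ≤ ∑ ω, p ω * ML := by
          refine Finset.sum_le_sum fun ω _ => mul_le_mul_of_nonneg_left ?_ (hp.1 ω)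
          refine le_trans (hULb a ω) ?_
          rw [hMLdef]
          exact Finset.le_sup' (fun ω => VL (e ω)) (Finset.mem_univ ω)
      _ = ML := hconst p hp ML
  obtain ⟨aL⟩ := ‹Nonempty AL›
  set mL : ℝ := Finset.univ.inf' huniv (UL aL) with hmLdef
  have hVLmin : ∀ p ∈ stdSimplex ℝ Ω, mL ≤ VL p := by
    intro p hp
    refine le_trans ?_ (hVLle p hp aL)
    calc mL = ∑ ω, p ω * mL := (hconst p hp mL).symm
      _ ≤ ∑ ω, p ω * UL aL ω := Finset.sum_le_sum fun ω _ =>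
          mul_le_mul_of_nonneg_left (Finset.inf'_le _ (Finset.mem_univ ω)) (hp.1 ω)
  set Mh : ℝ := MM - mL with hMhdef
  have hMh : ∀ p ∈ stdSimplex ℝ Ω, VM p - VL p ≤ Mh := by
    intro p hp
    have h1 := hVMmax p hp
    have h2 := hVLmin p hp
    rw [hMhdef]; linarith
  -- convexity of h = VM - VL via the VoI hypothesis
  have hconv : ∀ P ∈ stdSimplex ℝ Ω, ∀ Q ∈ stdSimplex ℝ Ω, ∀ a b : ℝ,
      0 ≤ a → 0 ≤ b → a + b = 1 →
      VM (fun ω => a * P ω + b * Q ω) - VL (fun ω => a * P ω + b * Q ω)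
        ≤ a * (VM P - VL P) + b * (VM Q - VL Q) := by
    intro P hP Q hQ a b ha hb hab
    set μ : Measure (Ω → ℝ) :=
      (ENNReal.ofReal a) • Measure.dirac P + (ENNReal.ofReal b) • Measure.dirac Q with hμdef
    have hint : ∀ f : (Ω → ℝ) → ℝ, ∫ x, f x ∂μ = a * f P + b * f Q := by
      intro f
      have h1 : Integrable f (Measure.dirac P) :=
        (integrable_const (f P)).congr (ae_eq_dirac f).symm
      have h2 : Integrable f (Measure.dirac Q) :=
        (integrable_const (f Q)).congr (ae_eq_dirac f).symm
      rw [hμdef, integral_add_measure (h1.smul_measure ENNReal.ofReal_ne_top)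
          (h2.smul_measure ENNReal.ofReal_ne_top), integral_smul_measure, integral_smul_measure,
        integral_dirac, integral_dirac, ENNReal.toReal_ofReal ha, ENNReal.toReal_ofReal hb,
        smul_eq_mul, smul_eq_mul]
    have hprob : IsProbabilityMeasure μ := by
      constructor
      rw [hμdef]
      simp only [Measure.add_apply, Measure.smul_apply, smul_eq_mul,
        Measure.dirac_apply_of_mem (Set.mem_univ P), Measure.dirac_apply_of_mem (Set.mem_univ Q),
        mul_one]
      rw [← ENNReal.ofReal_add ha hb, hab, ENNReal.ofReal_one]
    have hae : ∀ᵐ x ∂μ, x ∈ stdSimplex ℝ Ω := by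
      rw [hμdef, ae_add_measure_iff]
      constructor <;> apply Measure.ae_smul_measure <;> rw [ae_dirac_eq] <;> simpa
    have key := hVoI μ hprob hae
    simp only [hint] at key
    simp only [hVMdef, hVLdef]
    linarith [key]
  -- the epigraph of h over the simplex is closed
  set S : Set ((Ω → ℝ) × ℝ) := {y | y.1 ∈ stdSimplex ℝ Ω ∧ VM y.1 - VL y.1 ≤ y.2} with hSdef
  have hSconv : Convex ℝ S := by
    rintro ⟨y1, y2⟩ ⟨hy1, hy2⟩ ⟨z1, z2⟩ ⟨hz1, hz2⟩ a b ha hb hab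
    refine ⟨convex_stdSimplex ℝ Ω hy1 hz1 ha hb hab, ?_⟩
    have hpt : (a • ((y1, y2) : (Ω → ℝ) × ℝ) + b • (z1, z2)).1
        = fun ω => a * y1 ω + b * z1 ω := by
      funext ω; simp
    have h2 : (a • ((y1, y2) : (Ω → ℝ) × ℝ) + b • (z1, z2)).2 = a * y2 + b * z2 := by simp
    show VM (a • ((y1, y2) : (Ω → ℝ) × ℝ) + b • (z1, z2)).1
        - VL (a • ((y1, y2) : (Ω → ℝ) × ℝ) + b • (z1, z2)).1
        ≤ (a • ((y1, y2) : (Ω → ℝ) × ℝ) + b • (z1, z2)).2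
    rw [hpt, h2]
    have h := hconv y1 hy1 z1 hz1 a b ha hb hab
    have h3 := mul_le_mul_of_nonneg_left hy2 ha
    have h4 := mul_le_mul_of_nonneg_left hz2 hb
    linarith
  have hSclosed : IsClosed S := by
    rw [← isSeqClosed_iff_isClosed]
    intro x y hmem hten
    have h1 : Filter.Tendsto (fun n => (x n).1) Filter.atTop (nhds y.1) :=
      (continuous_fst.tendsto y).comp hten
    have hy1 : y.1 ∈ stdSimplex ℝ Ω :=
      (isClosed_stdSimplex ℝ Ω).mem_of_tendsto h1 (Filter.Eventually.of_forall fun n => (hmem n).1)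
    refine ⟨hy1, ?_⟩
    refine le_of_forall_pos_le_add fun ε hε => ?_
    set p := y.1 with hpdef
    set t := y.2 with htdef
    -- near optimal action at p
    obtain ⟨A, hA⟩ : ∃ a : AM, VM p - ε/8 < ∑ ω, p ω * UM a ω :=
      exists_lt_of_lt_ciSup (show VM p - ε/8 < VM p by linarith)
    -- the uniform distribution
    set p' : Ω → ℝ := fun _ => (Fintype.card Ω : ℝ)⁻¹ with hp'def
    have hcard : (0:ℝ) < Fintype.card Ω := by exact_mod_cast Fintype.card_pos
    have hp' : p' ∈ stdSimplex ℝ Ω := by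
      constructor
      · intro j; rw [hp'def]; positivity
      · simp [hp'def, Finset.sum_const, Finset.card_univ]
    set G : ℝ := ∑ ω, p' ω * UM A ω with hGdef
    set ca : ℝ := G - VL p' with hcadef
    set B : ℝ := |Mh| + |ca| + |VM p - VL p| + |t| + 1 with hBdef
    have hB : 0 < B := by rw [hBdef]; positivity
    set δ : ℝ := min (1/2) (ε/(8*B)) with hδdef
    have hδ0 : 0 < δ := by
      rw [hδdef]
      exact lt_min (by norm_num) (by positivity)
    have hδhalf : δ ≤ 1/2 := by rw [hδdef]; exact min_le_left _ _
    have hδB : δ * B ≤ ε/8 := by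
      have h1 : δ ≤ ε/(8*B) := by rw [hδdef]; exact min_le_right _ _
      calc δ * B ≤ (ε/(8*B)) * B := mul_le_mul_of_nonneg_right h1 hB.le
        _ = ε/8 := by
          rw [div_mul_eq_mul_div, mul_comm 8 B, ← div_div, mul_div_cancel_right₀ _ hB.ne']
    set s : ℝ := 1 - δ with hsdef
    have hs0 : 0 < s := by rw [hsdef]; linarith
    -- get a far-enough point of the sequence
    set η : ℝ := min (δ/(s * Fintype.card Ω)) (ε/8) with hηdef
    have hη0 : 0 < η := by
      rw [hηdef]; apply lt_min
      · positivity
      · positivity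
    obtain ⟨N, hN⟩ := (Metric.tendsto_atTop.mp hten) η hη0
    have hdist := hN N le_rfl
    set q := (x N).1 with hqdef
    set tn := (x N).2 with htndef
    have hdq : dist q p < η := by
      refine lt_of_le_of_lt ?_ hdist
      rw [Prod.dist_eq]
      exact le_max_left _ _
    have hdt : dist tn t < η := by
      refine lt_of_le_of_lt ?_ hdist
      rw [Prod.dist_eq]
      exact le_max_right _ _
    have htnb : tn ≤ t + ε/8 := by
      have h1 : |tn - t| < η := by rwa [Real.dist_eq] at hdt
      have h2 : η ≤ ε/8 := by rw [hηdef]; exact min_le_right _ _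
      have := abs_lt.mp h1
      linarith only [this.2, h2]
    have hcoord : ∀ ω, |p ω - q ω| ≤ δ/(s * Fintype.card Ω) := by
      intro ω
      have h1 : dist (q ω) (p ω) ≤ dist q p := dist_le_pi_dist q p ω
      have h2 : η ≤ δ/(s * Fintype.card Ω) := by rw [hηdef]; exact min_le_left _ _
      have h3 : |p ω - q ω| = dist (q ω) (p ω) := by rw [Real.dist_eq, abs_sub_comm]
      linarith only [h1, h2, h3, hdq]
    have hqΔ : q ∈ stdSimplex ℝ Ω := (hmem N).1
    have hmq : VM q - VL q ≤ tn := (hmem N).2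
    -- the auxiliary point r
    set r : Ω → ℝ := fun ω => p' ω + (s/δ) * (p ω - q ω) with hrdef
    have hrΔ : r ∈ stdSimplex ℝ Ω := by
      constructor
      · intro ω
        have h1 := hcoord ω
        have h2 : (s/δ) * |p ω - q ω| ≤ (s/δ) * (δ/(s * Fintype.card Ω)) :=
          mul_le_mul_of_nonneg_left h1 (by positivity)
        have h3 : (s/δ) * (δ/(s * Fintype.card Ω)) = (Fintype.card Ω : ℝ)⁻¹ := by
          field_simp
        have h4 := neg_abs_le (p ω - q ω)
        have h5 : -((s/δ) * |p ω - q ω|) ≤ (s/δ) * (p ω - q ω) := by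
          have := mul_le_mul_of_nonneg_left h4 (le_of_lt (by positivity : (0:ℝ) < s/δ))
          linarith
        simp only [hrdef, hp'def]
        rw [h3] at h2
        linarith only [h2, h5]
      · simp only [hrdef]
        rw [Finset.sum_add_distrib, ← Finset.mul_sum, Finset.sum_sub_distrib, hy1.2, hqΔ.2,
          hp'.2]
        ring
    -- the point ps as a combination
    set ps : Ω → ℝ := fun ω => δ * p' ω + s * p ω with hpsdef
    have hps_comb : ∀ ω, δ * r ω + s * q ω = ps ω := by
      intro ω
      simp only [hrdef, hpsdef]
      field_simp
      ring
    have hpsΔ : ps ∈ stdSimplex ℝ Ω := by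
      have h := convex_stdSimplex ℝ Ω hrΔ hqΔ hδ0.le hs0.le (by rw [hsdef]; ring)
      have heq : δ • r + s • q = ps := funext fun ω => by
        simpa [smul_eq_mul] using hps_comb ω
      rwa [heq] at h
    have hcomb := hconv r hrΔ q hqΔ δ s hδ0.le hs0.le (by rw [hsdef]; ring)
    have hfun : (fun ω => δ * r ω + s * q ω) = ps := funext hps_comb
    rw [hfun] at hcomb
    -- upper bound on h at ps
    have hDr : δ * (VM r - VL r) ≤ δ * Mh := mul_le_mul_of_nonneg_left (hMh r hrΔ) hδ0.le
    have hEq : s * (VM q - VL q) ≤ s * (t + ε/8) :=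
      mul_le_mul_of_nonneg_left (by linarith only [hmq, htnb]) hs0.le
    -- lower bound on h at ps
    have hAps : ∑ ω, ps ω * UM A ω = δ * G + s * (∑ ω, p ω * UM A ω) := by
      simp only [hpsdef, hGdef]
      exact hlin δ s p' p (UM A)
    clear_value VM VL MM ML mL Mh p t p' G ca B δ s η q tn r ps
    have hVMps : δ * G + s * (VM p - ε/8) ≤ VM ps := by
      have h1 := hVMle ps hpsΔ A
      have h2 : s * (VM p - ε/8) ≤ s * (∑ ω, p ω * UM A ω) :=
        mul_le_mul_of_nonneg_left (le_of_lt hA) hs0.le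
      rw [hAps] at h1
      linarith only [h1, h2]
    have hVLps : VL ps ≤ δ * VL p' + s * VL p := by
      apply hVLub
      intro a
      have e1 : ∑ ω, ps ω * UL a ω = δ * (∑ ω, p' ω * UL a ω) + s * (∑ ω, p ω * UL a ω) := by
        simp only [hpsdef]
        exact hlin δ s p' p (UL a)
      rw [e1]
      have h1 := mul_le_mul_of_nonneg_left (hVLle p' hp' a) hδ0.le
      have h2 := mul_le_mul_of_nonneg_left (hVLle p hy1 a) hs0.le
      linarith only [h1, h2]
    have E1 : δ * G + s * (VM p - ε/8) - (δ * VL p' + s * VL p) ≤ δ * Mh + s * (t + ε/8) := by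
      linarith only [hVMps, hVLps, hcomb, hDr, hEq]
    -- final arithmetic
    have f1 : δ * Mh ≤ δ * |Mh| := mul_le_mul_of_nonneg_left (le_abs_self _) hδ0.le
    have f2 : δ * ca = δ * G - δ * VL p' := by rw [hcadef]; ring
    have f2' : δ * (-|ca|) ≤ δ * ca := mul_le_mul_of_nonneg_left (neg_abs_le _) hδ0.le
    have f3 : δ * (VM p - VL p) ≤ δ * |VM p - VL p| :=
      mul_le_mul_of_nonneg_left (le_abs_self _) hδ0.le
    have f4 : δ * (-|t|) ≤ δ * t := mul_le_mul_of_nonneg_left (neg_abs_le _) hδ0.le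
    have hBexp : δ * B = δ * |Mh| + δ * |ca| + δ * |VM p - VL p| + δ * |t| + δ := by
      rw [hBdef]; ring
    have f6a : 0 ≤ δ * ε := mul_nonneg hδ0.le hε.le
    rw [hsdef] at E1
    linarith only [E1, f1, f2, f2', f3, f4, hBexp, hδB, f6a, hδ0, hε]
  -- strict separation gives approximate linear minorants that are exact at p
  have hsep : ∀ p ∈ stdSimplex ℝ Ω, ∀ ε : ℝ, 0 < ε →
      ∃ x : Ω → ℝ, (∀ q ∈ stdSimplex ℝ Ω, ∑ ω, q ω * x ω ≤ VM q - VL q) ∧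
        VM p - VL p - ε < ∑ ω, p ω * x ω := by
    intro p hp ε hε
    have hz : ((p, VM p - VL p - ε) : (Ω → ℝ) × ℝ) ∉ S := by
      intro hmem
      have h2 : VM p - VL p ≤ VM p - VL p - ε := hmem.2
      linarith
    obtain ⟨f, u, hfz, hfS⟩ := geometric_hahn_banach_point_closed hSconv hSclosed hz
    set c : ℝ := f (0, 1) with hcdef
    set g : (Ω → ℝ) → ℝ := fun v => f (v, 0) with hgdef
    have hsplit : ∀ (v : Ω → ℝ) (τ : ℝ), f (v, τ) = g v + τ * c := by
      intro v τ
      have h1 : ((v, τ) : (Ω → ℝ) × ℝ) = (v, 0) + τ • (0, 1) := by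
        simp [Prod.ext_iff]
      simp only [hgdef, hcdef]
      rw [h1, f.map_add, f.map_smul, smul_eq_mul]
    have hmemS : ∀ τ : ℝ, VM p - VL p ≤ τ → ((p, τ) : (Ω → ℝ) × ℝ) ∈ S := fun τ hτ => ⟨hp, hτ⟩
    have hfz' : g p + (VM p - VL p - ε) * c < u := by rw [← hsplit]; exact hfz
    have hc : 0 < c := by
      rcases lt_trichotomy c 0 with h | h | h
      · exfalso
        have hS1 := hfS (p, max (VM p - VL p) ((u - g p)/c)) (hmemS _ (le_max_left _ _))
        rw [hsplit] at hS1
        have hKc : ((u - g p)/c) * c = u - g p := div_mul_cancel₀ _ h.ne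
        have hmax : (u - g p)/c ≤ max (VM p - VL p) ((u - g p)/c) := le_max_right _ _
        have hmul : (max (VM p - VL p) ((u - g p)/c)) * c ≤ ((u - g p)/c) * c :=
          mul_le_mul_of_nonpos_right hmax h.le
        linarith
      · exfalso
        have hS1 := hfS (p, VM p - VL p) (hmemS _ le_rfl)
        rw [hsplit, h, mul_zero, add_zero] at hS1
        rw [h, mul_zero, add_zero] at hfz'
        linarith
      · exact h
    have glin : ∀ v : Ω → ℝ, g v = ∑ ω, v ω * g (e ω) := by
      intro v
      have hv : ((v, (0:ℝ)) : (Ω → ℝ) × ℝ) = ∑ ω, v ω • ((e ω, (0:ℝ)) : (Ω → ℝ) × ℝ) := by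
        rw [Prod.ext_iff]
        constructor
        · rw [Prod.fst_sum]
          simp only [Prod.smul_mk, Prod.fst]
          simp only [hedef]
          exact pi_eq_sum_univ v
        · rw [Prod.snd_sum]
          simp
      have : f (v, (0:ℝ)) = ∑ ω, v ω * f (e ω, 0) := by
        rw [hv, map_sum]
        refine Finset.sum_congr rfl fun ω _ => ?_
        rw [f.map_smul, smul_eq_mul]
      simpa [hgdef] using this
    set x : Ω → ℝ := fun ω => (u - g (e ω))/c with hxdef
    have hxval : ∀ v ∈ stdSimplex ℝ Ω, ∑ ω, v ω * x ω = (u - g v)/c := by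
      intro v hv
      simp only [hxdef]
      rw [glin v, eq_div_iff hc.ne', Finset.sum_mul]
      have hterm : ∀ ω ∈ Finset.univ, (v ω * ((u - g (e ω))/c)) * c
          = v ω * u - v ω * g (e ω) := by
        intro ω _
        field_simp
      rw [Finset.sum_congr rfl hterm, Finset.sum_sub_distrib, ← Finset.sum_mul, hv.2, one_mul]
    refine ⟨x, ?_, ?_⟩
    · intro q hq
      have hS1 := hfS (q, VM q - VL q) ⟨hq, le_rfl⟩
      rw [hsplit] at hS1
      rw [hxval q hq]
      have h1 : u - g q < (VM q - VL q) * c := by linarith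
      exact le_of_lt ((div_lt_iff₀ hc).mpr h1)
    · rw [hxval p hp]
      rw [lt_div_iff₀ hc]
      linarith
  -- assemble the conclusion
  refine ⟨{x : Ω → ℝ | ∀ q ∈ stdSimplex ℝ Ω, ∑ ω, q ω * x ω ≤ VM q - VL q}, ?_, ?_⟩
  · obtain ⟨aM⟩ := ‹Nonempty AM›
    refine ⟨fun ω => UM aM ω - ML, ?_⟩
    intro q hq
    have h1 : ∑ ω, q ω * (UM aM ω - ML) = (∑ ω, q ω * UM aM ω) - ML := by
      simp only [mul_sub]
      rw [Finset.sum_sub_distrib, hconst q hq ML]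
    rw [h1]
    have h2 := hVMle q hq aM
    have h3 := hVLmax q hq
    linarith
  · intro p hp
    have hbdd : BddAbove ((fun x : Ω → ℝ => ∑ ω, p ω * x ω) ''
        {x : Ω → ℝ | ∀ q ∈ stdSimplex ℝ Ω, ∑ ω, q ω * x ω ≤ VM q - VL q}) := by
      refine ⟨VM p - VL p, ?_⟩
      rintro β ⟨x, hx, rfl⟩
      exact hx p hp
    refine ⟨hbdd, ?_⟩
    have hrange : BddAbove (Set.range fun x :
        {x : Ω → ℝ | ∀ q ∈ stdSimplex ℝ Ω, ∑ ω, q ω * x ω ≤ VM q - VL q} =>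
        ∑ ω, p ω * (x : Ω → ℝ) ω) := by
      refine ⟨VM p - VL p, ?_⟩
      rintro β ⟨⟨x, hx⟩, rfl⟩
      exact hx p hp
    have hub : (⨆ x : {x : Ω → ℝ | ∀ q ∈ stdSimplex ℝ Ω, ∑ ω, q ω * x ω ≤ VM q - VL q},
        ∑ ω, p ω * (x : Ω → ℝ) ω) ≤ VM p - VL p := by
      have : Nonempty {x : Ω → ℝ | ∀ q ∈ stdSimplex ℝ Ω, ∑ ω, q ω * x ω ≤ VM q - VL q} := by
        obtain ⟨aM⟩ := ‹Nonempty AM›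
        refine ⟨⟨fun ω => UM aM ω - ML, ?_⟩⟩
        intro q hq
        have h1 : ∑ ω, q ω * (UM aM ω - ML) = (∑ ω, q ω * UM aM ω) - ML := by
          simp only [mul_sub]
          rw [Finset.sum_sub_distrib, hconst q hq ML]
        rw [h1]
        have h2 := hVMle q hq aM
        have h3 := hVLmax q hq
        linarith
      exact ciSup_le fun ⟨x, hx⟩ => hx p hp
    have hlb : VM p - VL p ≤ ⨆ x : {x : Ω → ℝ | ∀ q ∈ stdSimplex ℝ Ω,
        ∑ ω, q ω * x ω ≤ VM q - VL q}, ∑ ω, p ω * (x : Ω → ℝ) ω := by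
      refine le_of_forall_pos_le_add fun ε hε => ?_
      obtain ⟨x, hxC, hxp⟩ := hsep p hp ε hε
      have hle := le_ciSup hrange (⟨x, hxC⟩ :
        {x : Ω → ℝ | ∀ q ∈ stdSimplex ℝ Ω, ∑ ω, q ω * x ω ≤ VM q - VL q})
      linarith
    have heq := le_antisymm hub hlb
    rw [show (⨆ a : AM, ∑ ω, p ω * UM a ω) = VM p from rfl,
      show (⨆ a : AL, ∑ ω, p ω * UL a ω) = VL p from rfl]
    linarith
end
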